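/- Assume: consistency for a=2; conditional exchangeability over A in the external data for a=2 with external positivity P(A=2|X=x,S=0)>0; mean transportability to the third population: E[Y²|X=x,S=2]=E[Y²|X=x,S=0] whenever P(X=x,S=2)>0 and P(X=x,S=0)>0; and positivity P(S=0|X=x)>0 for every x with P(X=x,S=2)>0. Then E[Y² | S=2] = γ*_{0,2} := Σ_x E[Y|X=x,S=0,A=2] · P(X=x | S=2), and combined with the analogous identification of E[Y¹|S=2] by γ*_{1,1}, the effect E[Y¹ − Y² | S=2] equals ψ* := γ*_{1,1} − γ*_{0,2}. -/

import Mathlib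

/-!
Condition on `X` within the target population `S = t` (law of total expectation). In a stratum
`X = x` of positive target mass, positivity of `S = s` given `X = x` makes the source stratum
non-null, so transportability moves the mean of `Yᵃ` to the source stratum, exchangeability to
its treated part, and consistency replaces `Yᵃ` by the observed `Y` there. The statement about
the effect then follows by linearity of conditional expectation.
-/

open Finset
open scoped Classical

noncomputable def pr {Ω : Type*} [Fintype Ω] (P : Ω → ℝ) (E : Ω → Prop) : ℝ :=
  ∑ ω, if E ω then P ω else 0

noncomputable def cexp {Ω : Type*} [Fintype Ω] (P : Ω → ℝ) (Y : Ω → ℝ) (E : Ω → Prop) : ℝ :=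
  (∑ ω, if E ω then Y ω * P ω else 0) / pr P E

noncomputable def cpr {Ω : Type*} [Fintype Ω] (P : Ω → ℝ) (E F : Ω → Prop) : ℝ :=
  pr P (fun ω => E ω ∧ F ω) / pr P F

section

variable {Ω : Type*} [Fintype Ω] {P : Ω → ℝ}

lemma pr_nonneg (hP : ∀ ω, 0 ≤ P ω) (E : Ω → Prop) : 0 ≤ pr P E :=
  Finset.sum_nonneg fun ω _ => by split_ifs <;> simp [hP ω]

lemma pr_and_comm (E F : Ω → Prop) :
    pr P (fun ω => E ω ∧ F ω) = pr P (fun ω => F ω ∧ E ω) :=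
  congrArg (pr P) (funext fun _ => propext and_comm)

lemma pr_pos_of_cpr_pos (hP : ∀ ω, 0 ≤ P ω) {E F : Ω → Prop} (h : 0 < cpr P E F) :
    0 < pr P (fun ω => E ω ∧ F ω) := by
  refine (pr_nonneg hP _).lt_of_ne fun h0 => ?_
  simp [cpr, ← h0] at h

lemma eq_zero_of_pr_eq_zero (hP : ∀ ω, 0 ≤ P ω) {E : Ω → Prop} (h : pr P E = 0) {ω : Ω}
    (hω : E ω) : P ω = 0 := by
  have := (Finset.sum_eq_zero_iff_of_nonneg fun ω _ => by split_ifs <;> simp [hP ω]).mp h ω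
    (Finset.mem_univ ω)
  simpa [hω] using this

lemma cexp_congr {Y Z : Ω → ℝ} {E : Ω → Prop} (h : ∀ ω, E ω → Y ω = Z ω) :
    cexp P Y E = cexp P Z E := by
  unfold cexp
  congr 1
  refine Finset.sum_congr rfl fun ω _ => ?_
  split_ifs with hω
  · rw [h ω hω]
  · rfl

lemma cexp_sub (Y Z : Ω → ℝ) (E : Ω → Prop) :
    cexp P (fun ω => Y ω - Z ω) E = cexp P Y E - cexp P Z E := by
  simp only [cexp, ← sub_div, ← Finset.sum_sub_distrib]
  congr 1
  exact Finset.sum_congr rfl fun ω _ => by split_ifs <;> ring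

/-- Also for a null event `E`, where `cexp` takes the junk value `0`. -/
lemma cexp_mul_pr (hP : ∀ ω, 0 ≤ P ω) (Z : Ω → ℝ) (E : Ω → Prop) :
    cexp P Z E * pr P E = ∑ ω, if E ω then Z ω * P ω else 0 := by
  by_cases hE : pr P E = 0
  · rw [hE, mul_zero]
    refine (Finset.sum_eq_zero fun ω _ => ?_).symm
    split_ifs with hω
    · rw [eq_zero_of_pr_eq_zero hP hE hω, mul_zero]
    · rfl
  · exact div_mul_cancel₀ _ hE

lemma sum_ite_eq_sum_strata {𝓧 : Type*} [Fintype 𝓧] (X : Ω → 𝓧) (Z : Ω → ℝ) (E : Ω → Prop) :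
    (∑ ω, if E ω then Z ω * P ω else 0) =
      ∑ x, ∑ ω, if X ω = x ∧ E ω then Z ω * P ω else 0 := by
  rw [Finset.sum_comm]
  simp only [ite_and, Finset.sum_ite_eq, Finset.mem_univ, if_true]

theorem cexp_eq_sum_strata (hP : ∀ ω, 0 ≤ P ω) {𝓧 : Type*} [Fintype 𝓧]
    (X : Ω → 𝓧) (Z : Ω → ℝ) (E : Ω → Prop) :
    cexp P Z E = ∑ x ∈ univ.filter (fun x => 0 < pr P (fun ω => X ω = x ∧ E ω)),
      cexp P Z (fun ω => X ω = x ∧ E ω) * (pr P (fun ω => X ω = x ∧ E ω) / pr P E) := by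
  have hnull : ∀ x ∈ univ, cexp P Z (fun ω => X ω = x ∧ E ω) * pr P (fun ω => X ω = x ∧ E ω) ≠ 0 →
      0 < pr P (fun ω => X ω = x ∧ E ω) := fun x _ hx =>
    (pr_nonneg hP _).lt_of_ne fun h0 => hx (by rw [← h0, mul_zero])
  simp only [← mul_div_assoc, ← Finset.sum_div]
  rw [Finset.sum_filter_of_ne hnull, cexp, sum_ite_eq_sum_strata X]
  simp only [cexp_mul_pr hP]
  congr! -- the two sides differ only in their `Decidable` instances

theorem cexp_target_eq_transported_sum (hP : ∀ ω, 0 ≤ P ω) {𝓧 σ α : Type*} [Fintype 𝓧]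
    (X : Ω → 𝓧) (S : Ω → σ) (A : Ω → α) (Y Ya : Ω → ℝ) {s t : σ} {a : α}
    (hcons : ∀ ω, A ω = a → Ya ω = Y ω)
    (hexch : ∀ x, 0 < pr P (fun ω => X ω = x ∧ S ω = s) →
      cexp P Ya (fun ω => X ω = x ∧ S ω = s) = cexp P Ya (fun ω => X ω = x ∧ S ω = s ∧ A ω = a))
    (htrans : ∀ x, 0 < pr P (fun ω => X ω = x ∧ S ω = t) → 0 < pr P (fun ω => X ω = x ∧ S ω = s) →
      cexp P Ya (fun ω => X ω = x ∧ S ω = t) = cexp P Ya (fun ω => X ω = x ∧ S ω = s))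
    (hpos : ∀ x, 0 < pr P (fun ω => X ω = x ∧ S ω = t) →
      0 < cpr P (fun ω => S ω = s) (fun ω => X ω = x)) :
    cexp P Ya (fun ω => S ω = t) =
      ∑ x ∈ univ.filter (fun x => 0 < pr P (fun ω => X ω = x ∧ S ω = t)),
        cexp P Y (fun ω => X ω = x ∧ S ω = s ∧ A ω = a) *
          (pr P (fun ω => X ω = x ∧ S ω = t) / pr P (fun ω => S ω = t)) := by
  rw [cexp_eq_sum_strata hP X]
  refine Finset.sum_congr rfl fun x hx => ?_
  have ht := (Finset.mem_filter.mp hx).2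
  have hs : 0 < pr P (fun ω => X ω = x ∧ S ω = s) :=
    pr_and_comm (P := P) (fun ω => S ω = s) (fun ω => X ω = x) ▸ pr_pos_of_cpr_pos hP (hpos x ht)
  rw [htrans x ht hs, hexch x hs, cexp_congr fun ω hω => hcons ω hω.2.2]

end

theorem stmt15_general    {Ω 𝓧 : Type*} [Fintype Ω] [Fintype 𝓧]
    (P : Ω → ℝ) (hP : ∀ ω, 0 ≤ P ω)
    (X : Ω → 𝓧) (S : Ω → ℕ) (A : Ω → ℕ) (Y : Ω → ℝ)
    (Y1 Y2 : Ω → ℝ)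
    (hcons2 : ∀ ω, A ω = 2 → Y2 ω = Y ω)
    (hexchext2 : ∀ x, 0 < pr P (fun ω => X ω = x ∧ S ω = 0) → cexp P Y2 (fun ω => X ω = x ∧ S ω = 0) = cexp P Y2 (fun ω => X ω = x ∧ S ω = 0 ∧ A ω = 2))
    (htrans2 : ∀ x, 0 < pr P (fun ω => X ω = x ∧ S ω = 2) → 0 < pr P (fun ω => X ω = x ∧ S ω = 0) → cexp P Y2 (fun ω => X ω = x ∧ S ω = 2) = cexp P Y2 (fun ω => X ω = x ∧ S ω = 0))
    (hpos0x : ∀ x, 0 < pr P (fun ω => X ω = x ∧ S ω = 2) → 0 < cpr P (fun ω => S ω = 0) (fun ω => X ω = x))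
    (hcons1 : ∀ ω, A ω = 1 → Y1 ω = Y ω)
    (hexch1 : ∀ x, 0 < pr P (fun ω => X ω = x ∧ S ω = 1) → cexp P Y1 (fun ω => X ω = x ∧ S ω = 1) = cexp P Y1 (fun ω => X ω = x ∧ S ω = 1 ∧ A ω = 1))
    (htrans1 : ∀ x, 0 < pr P (fun ω => X ω = x ∧ S ω = 2) → 0 < pr P (fun ω => X ω = x ∧ S ω = 1) → cexp P Y1 (fun ω => X ω = x ∧ S ω = 2) = cexp P Y1 (fun ω => X ω = x ∧ S ω = 1))
    (hpos1x : ∀ x, 0 < pr P (fun ω => X ω = x ∧ S ω = 2) → 0 < cpr P (fun ω => S ω = 1) (fun ω => X ω = x))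
    : cexp P Y2 (fun ω => S ω = 2) =
      (∑ x ∈ univ.filter (fun x => 0 < pr P (fun ω => X ω = x ∧ S ω = 2)),
        cexp P Y (fun ω => X ω = x ∧ S ω = 0 ∧ A ω = 2) * (pr P (fun ω => X ω = x ∧ S ω = 2) / pr P (fun ω => S ω = 2))) ∧
      cexp P (fun ω => Y1 ω - Y2 ω) (fun ω => S ω = 2) =
      (∑ x ∈ univ.filter (fun x => 0 < pr P (fun ω => X ω = x ∧ S ω = 2)),
        cexp P Y (fun ω => X ω = x ∧ S ω = 1 ∧ A ω = 1) * (pr P (fun ω => X ω = x ∧ S ω = 2) / pr P (fun ω => S ω = 2))) -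
      (∑ x ∈ univ.filter (fun x => 0 < pr P (fun ω => X ω = x ∧ S ω = 2)),
        cexp P Y (fun ω => X ω = x ∧ S ω = 0 ∧ A ω = 2) * (pr P (fun ω => X ω = x ∧ S ω = 2) / pr P (fun ω => S ω = 2))) := by
  have h2 := cexp_target_eq_transported_sum hP X S A Y Y2 hcons2 hexchext2 htrans2 hpos0x
  have h1 := cexp_target_eq_transported_sum hP X S A Y Y1 hcons1 hexch1 htrans1 hpos1x
  exact ⟨h2, by rw [cexp_sub, h1, h2]⟩

theorem stmt15    {Ω 𝓧 : Type*} [Fintype Ω] [Fintype 𝓧]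
    (P : Ω → ℝ) (hP : ∀ ω, 0 ≤ P ω) (hPsum : ∑ ω, P ω = 1)
    (X : Ω → 𝓧) (S : Ω → ℕ) (A : Ω → ℕ) (Y : Ω → ℝ)
    (Y1 Y2 : Ω → ℝ)
    (hS2 : 0 < pr P (fun ω => S ω = 2))
    (hcons2 : ∀ ω, A ω = 2 → Y2 ω = Y ω)
    (hexchext2 : ∀ x, 0 < pr P (fun ω => X ω = x ∧ S ω = 0) → cexp P Y2 (fun ω => X ω = x ∧ S ω = 0) = cexp P Y2 (fun ω => X ω = x ∧ S ω = 0 ∧ A ω = 2))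
    (hposext2 : ∀ x, 0 < pr P (fun ω => X ω = x ∧ S ω = 0) → 0 < cpr P (fun ω => A ω = 2) (fun ω => X ω = x ∧ S ω = 0))
    (htrans2 : ∀ x, 0 < pr P (fun ω => X ω = x ∧ S ω = 2) → 0 < pr P (fun ω => X ω = x ∧ S ω = 0) → cexp P Y2 (fun ω => X ω = x ∧ S ω = 2) = cexp P Y2 (fun ω => X ω = x ∧ S ω = 0))
    (hpos0x : ∀ x, 0 < pr P (fun ω => X ω = x ∧ S ω = 2) → 0 < cpr P (fun ω => S ω = 0) (fun ω => X ω = x))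
    (hcons1 : ∀ ω, A ω = 1 → Y1 ω = Y ω)
    (hexch1 : ∀ x, 0 < pr P (fun ω => X ω = x ∧ S ω = 1) → cexp P Y1 (fun ω => X ω = x ∧ S ω = 1) = cexp P Y1 (fun ω => X ω = x ∧ S ω = 1 ∧ A ω = 1))
    (hpos1 : ∀ x, 0 < pr P (fun ω => X ω = x ∧ S ω = 1) → 0 < cpr P (fun ω => A ω = 1) (fun ω => X ω = x ∧ S ω = 1))
    (htrans1 : ∀ x, 0 < pr P (fun ω => X ω = x ∧ S ω = 2) → 0 < pr P (fun ω => X ω = x ∧ S ω = 1) → cexp P Y1 (fun ω => X ω = x ∧ S ω = 2) = cexp P Y1 (fun ω => X ω = x ∧ S ω = 1))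
    (hpos1x : ∀ x, 0 < pr P (fun ω => X ω = x ∧ S ω = 2) → 0 < cpr P (fun ω => S ω = 1) (fun ω => X ω = x))
    : cexp P Y2 (fun ω => S ω = 2) =
      (∑ x ∈ univ.filter (fun x => 0 < pr P (fun ω => X ω = x ∧ S ω = 2)),
        cexp P Y (fun ω => X ω = x ∧ S ω = 0 ∧ A ω = 2) * (pr P (fun ω => X ω = x ∧ S ω = 2) / pr P (fun ω => S ω = 2))) ∧
      cexp P (fun ω => Y1 ω - Y2 ω) (fun ω => S ω = 2) =
      (∑ x ∈ univ.filter (fun x => 0 < pr P (fun ω => X ω = x ∧ S ω = 2)),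
        cexp P Y (fun ω => X ω = x ∧ S ω = 1 ∧ A ω = 1) * (pr P (fun ω => X ω = x ∧ S ω = 2) / pr P (fun ω => S ω = 2))) -
      (∑ x ∈ univ.filter (fun x => 0 < pr P (fun ω => X ω = x ∧ S ω = 2)),
        cexp P Y (fun ω => X ω = x ∧ S ω = 0 ∧ A ω = 2) * (pr P (fun ω => X ω = x ∧ S ω = 2) / pr P (fun ω => S ω = 2))) :=
  stmt15_general P hP X S A Y Y1 Y2 hcons2 hexchext2 htrans2 hpos0x hcons1 hexch1 htrans1 hpos1x
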